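/- For every integer m ≥ 3, n_p({2,m};4) = m+2, and the complete bipartite graph K_{2,m} is the unique planar ({2,m};4)-cage (up to isomorphism). -/

import Mathlib

open SimpleGraph

/-- `H` is a minor of `G`: there is an assignment of pairwise disjoint connected
branch sets in `G` to the vertices of `H`, with an edge of `G` between the branch
sets of any two adjacent vertices of `H`. -/
def SimpleGraph.IsMinorOf {W V : Type*} (H : SimpleGraph W) (G : SimpleGraph V) : Prop :=
  ∃ f : W → Set V,
    (∀ w, (G.induce (f w)).Connected) ∧
    (Pairwise fun w₁ w₂ => Disjoint (f w₁) (f w₂)) ∧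
    ∀ ⦃w₁ w₂⦄, H.Adj w₁ w₂ → ∃ v₁ ∈ f w₁, ∃ v₂ ∈ f w₂, G.Adj v₁ v₂

/-- A graph is planar iff it has no `K₅` minor and no `K₃,₃` minor (Wagner's theorem). -/
def SimpleGraph.IsPlanar {V : Type*} (G : SimpleGraph V) : Prop :=
  ¬ (completeGraph (Fin 5)).IsMinorOf G ∧
    ¬ (completeBipartiteGraph (Fin 3) (Fin 3)).IsMinorOf G

/-- A graph is outerplanar iff it has no `K₄` minor and no `K₂,₃` minor. -/
def SimpleGraph.IsOuterplanar {V : Type*} (G : SimpleGraph V) : Prop :=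
  ¬ (completeGraph (Fin 4)).IsMinorOf G ∧
    ¬ (completeBipartiteGraph (Fin 2) (Fin 3)).IsMinorOf G

/-- The degree of a vertex, as the cardinality of its neighbour set. -/
noncomputable def SimpleGraph.degN {V : Type*} (G : SimpleGraph V) (v : V) : ℕ :=
  (G.neighborSet v).ncard

/-- An `({r,m};g)`-graph: girth `g`, every vertex has degree `r` or `m`, both occur. -/
def IsBigirthGraph {V : Type*} (G : SimpleGraph V) (r m g : ℕ) : Prop :=
  G.girth = g ∧ (∀ v, G.degN v = r ∨ G.degN v = m) ∧
    (∃ v, G.degN v = r) ∧ (∃ v, G.degN v = m)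

/-- The set of orders of finite planar `({r,m};g)`-graphs. -/
def bicageOrders (r m g : ℕ) : Set ℕ :=
  {n | ∃ (V : Type) (_ : Fintype V) (G : SimpleGraph V),
    G.IsPlanar ∧ IsBigirthGraph G r m g ∧ Fintype.card V = n}

/-!
Every minor of `K_{2,m}` has a vertex cover of at most two vertices (the branch sets meeting the
side of size two), while `K₅` and `K₃,₃` need four and three, so `K_{2,m}` is planar.

Conversely, girth 4 makes `G` triangle-free. If `v` has degree `m`, each neighbour `u` of `v` has
degree at least 2, hence a neighbour outside `{v} ∪ N(v)`, so `G` has at least `m + 2` vertices.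
With exactly `m + 2` vertices this outside vertex `w` is the same for every `u`, and `N(v)` is
independent, so `G` is complete bipartite between `{v, w}` and `N(v)`.
-/

namespace SimpleGraph

variable {V W α β : Type*} {G : SimpleGraph V}

lemma IsMinorOf.vertexCoverNum_le {H : SimpleGraph W}
    (h : H.IsMinorOf (completeBipartiteGraph α β)) : H.vertexCoverNum ≤ ENat.card α := by
  obtain ⟨f, -, hdisj, hadj⟩ := h
  let s : Set W := {w | ∃ a, Sum.inl a ∈ f w}
  have hcover : H.IsVertexCover s := by
    intro w₁ w₂ hw
    obtain ⟨_ | b₁, hv₁, _ | b₂, hv₂, hv⟩ := hadj hw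
    exacts [Or.inl ⟨_, hv₁⟩, Or.inl ⟨_, hv₁⟩, Or.inr ⟨_, hv₂⟩, by simp at hv]
  have hinj : Function.Injective fun w : s ↦ w.2.choose := by
    intro w₁ w₂ (hw : w₁.2.choose = w₂.2.choose)
    by_contra hne
    have h₂ := w₂.2.choose_spec
    rw [← hw] at h₂
    exact Set.not_disjoint_iff.2 ⟨_, w₁.2.choose_spec, h₂⟩ (hdisj (Subtype.coe_ne_coe.2 hne))
  exact hcover.vertexCoverNum_le.trans (ENat.card_le_card_of_injective hinj)

lemma le_vertexCoverNum_completeBipartiteGraph :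
    min (ENat.card α) (ENat.card β) ≤ (completeBipartiteGraph α β).vertexCoverNum := by
  obtain ⟨s, hs, hcover⟩ := vertexCoverNum_exists (completeBipartiteGraph α β)
  rw [← hs]
  by_cases hα : ∀ a, Sum.inl a ∈ s
  · refine min_le_left _ _ |>.trans ?_
    exact ENat.card_le_card_of_injective (f := fun a : α ↦ (⟨_, hα a⟩ : s))
      fun a b hab ↦ by simpa using hab
  · push Not at hα
    obtain ⟨a, ha⟩ := hα
    have hβ : ∀ b, Sum.inr b ∈ s := fun b ↦
      (hcover (by simp : (completeBipartiteGraph α β).Adj (.inl a) (.inr b))).resolve_left ha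
    refine min_le_right _ _ |>.trans ?_
    exact ENat.card_le_card_of_injective (f := fun b : β ↦ (⟨_, hβ b⟩ : s))
      fun a b hab ↦ by simpa using hab

lemma completeBipartiteGraph_isPlanar (hα : ENat.card α ≤ 2) :
    (completeBipartiteGraph α β).IsPlanar := by
  constructor
  · intro h
    have := h.vertexCoverNum_le.trans hα
    norm_num at this
  · intro h
    have := (le_vertexCoverNum_completeBipartiteGraph.trans h.vertexCoverNum_le).trans hα
    norm_num at this

lemma egirth_completeBipartiteGraph [Nontrivial α] [Nontrivial β] :
    (completeBipartiteGraph α β).egirth = 4 := by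
  refine le_antisymm ?_ ?_
  · obtain ⟨a₁, a₂, ha⟩ := exists_pair_ne α
    obtain ⟨b₁, b₂, hb⟩ := exists_pair_ne β
    let w : (completeBipartiteGraph α β).Walk (.inl a₁) (.inl a₁) :=
      .cons (v := .inr b₁) (by simp) <| .cons (v := .inl a₂) (by simp) <|
        .cons (v := .inr b₂) (by simp) <| .cons (by simp) .nil
    have hw : w.IsCycle := by simp [w, Walk.isCycle_def, ha, ha.symm, hb]
    simpa [w] using egirth_le_length hw
  · have hcol : (completeBipartiteGraph α β).Colorable 2 := by
      simpa using (CompleteBipartiteGraph.bicoloring α β).colorable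
    refine le_egirth.2 fun a w hw ↦ ?_
    have hlen := hw.three_le_length
    have heven := two_colorable_iff_forall_loop_even.1 hcol a w
    have : 4 ≤ w.length := by
      rcases heven with ⟨k, hk⟩
      omega
    exact_mod_cast this

lemma girth_completeBipartiteGraph [Nontrivial α] [Nontrivial β] :
    (completeBipartiteGraph α β).girth = 4 := by
  simp [girth, egirth_completeBipartiteGraph]

lemma degN_completeBipartiteGraph_inl (a : α) :
    (completeBipartiteGraph α β).degN (.inl a) = Nat.card β := by
  have : (completeBipartiteGraph α β).neighborSet (.inl a) = Set.range Sum.inr := by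
    ext (_ | _) <;> simp
  rw [degN, this, Set.ncard_range_of_injective Sum.inr_injective]

lemma degN_completeBipartiteGraph_inr (b : β) :
    (completeBipartiteGraph α β).degN (.inr b) = Nat.card α := by
  have : (completeBipartiteGraph α β).neighborSet (.inr b) = Set.range Sum.inl := by
    ext (_ | _) <;> simp
  rw [degN, this, Set.ncard_range_of_injective Sum.inl_injective]

lemma cliqueFree_three_of_three_lt_girth (h : 3 < G.girth) :
    G.CliqueFree 3 := by
  intro s hs
  obtain ⟨u, w, hw, hlen⟩ := is3Clique_iff_exists_cycle_length_three.1 ⟨s, hs⟩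
  have := girth_le_length hw
  omega

lemma exists_adj_notMem_insert_neighborSet (hG : G.CliqueFree 3) {v u : V} (hvu : G.Adj v u)
    (hu : 2 ≤ G.degN u) : ∃ w, G.Adj u w ∧ w ∉ insert v (G.neighborSet v) := by
  obtain ⟨w, huw, hwv⟩ := Set.exists_ne_of_one_lt_ncard hu v
  refine ⟨w, huw, ?_⟩
  rintro (rfl | hvw)
  · exact hwv rfl
  · exact G.isIndepSet_neighborSet_of_triangleFree hG v hvu hvw (G.ne_of_adj huw) huw

def isoCompleteBipartiteGraphOfAdjIff (s : Set V) [DecidablePred (· ∈ s)]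
    (h : ∀ x y, G.Adj x y ↔ (x ∈ s ↔ y ∈ sᶜ)) : G ≃g completeBipartiteGraph s ↥sᶜ :=
  RelIso.symm
    { toEquiv := Equiv.Set.sumCompl s
      map_rel_iff' := by
        rintro (⟨a, ha⟩ | ⟨a, ha⟩) (⟨b, hb⟩ | ⟨b, hb⟩) <;> simp [h, ha, hb] <;> exact ha }

lemma adj_iff_of_compl_insert_neighborSet_eq_singleton (hG : G.CliqueFree 3) {v w₀ : V}
    (hdeg : ∀ u, G.Adj v u → 2 ≤ G.degN u) (hw₀ : (insert v (G.neighborSet v))ᶜ = {w₀})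
    (x y : V) : G.Adj x y ↔ (x ∈ (G.neighborSet v)ᶜ ↔ y ∈ (G.neighborSet v)ᶜᶜ) := by
  set N := G.neighborSet v
  have hmem : ∀ x, x ∉ insert v N ↔ x = w₀ := fun x ↦ by
    rw [← Set.mem_compl_iff, hw₀, Set.mem_singleton_iff]
  have hw₀N : w₀ ∉ N := fun h ↦ ((hmem w₀).2 rfl) (.inr h)
  have hNc : ∀ x, x ∉ N → x = v ∨ x = w₀ := fun x hx ↦ by
    by_cases hxv : x = v
    · exact .inl hxv
    · exact .inr <| (hmem x).1 <| by rintro (h | h) <;> contradiction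
  have hadj : ∀ u ∈ N, G.Adj u w₀ := fun u hu ↦ by
    obtain ⟨w, huw, hw⟩ := exists_adj_notMem_insert_neighborSet hG hu (hdeg u hu)
    rwa [(hmem w).1 hw] at huw
  have hNN : ∀ x ∈ N, ∀ y ∈ N, ¬ G.Adj x y := fun x hx y hy hxy ↦
    G.isIndepSet_neighborSet_of_triangleFree hG v hx hy (G.ne_of_adj hxy) hxy
  simp only [Set.mem_compl_iff, not_not]
  by_cases hx : x ∈ N <;> by_cases hy : y ∈ N
  · simp [hx, hy, hNN x hx y hy]
  · simp only [hx, hy, iff_true, not_true_eq_false]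
    rcases hNc y hy with rfl | rfl
    exacts [G.adj_symm hx, hadj x hx]
  · simp only [hx, hy, iff_true, not_false_eq_true]
    rcases hNc x hx with rfl | rfl
    exacts [hy, G.adj_symm (hadj y hy)]
  · rcases hNc x hx with rfl | rfl <;> rcases hNc y hy with rfl | rfl <;>
      simp_all [N, G.adj_comm]

variable [Fintype V]

lemma degN_add_two_le_card (hG : G.CliqueFree 3) {v u : V} (hvu : G.Adj v u)
    (hu : 2 ≤ G.degN u) : G.degN v + 2 ≤ Fintype.card V := by
  obtain ⟨w, -, hw⟩ := exists_adj_notMem_insert_neighborSet hG hvu hu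
  calc G.degN v + 2 = (insert w (insert v (G.neighborSet v))).ncard := by
        rw [Set.ncard_insert_of_notMem hw, Set.ncard_insert_of_notMem G.notMem_neighborSet_self,
          degN]
    _ ≤ Nat.card V := Set.ncard_le_card _
    _ = Fintype.card V := Nat.card_eq_fintype_card

lemma exists_compl_insert_neighborSet_eq_singleton {v : V}
    (hcard : Fintype.card V = G.degN v + 2) :
    ∃ w₀, (insert v (G.neighborSet v))ᶜ = {w₀} := by
  rw [← Set.ncard_eq_one, Set.ncard_compl, Set.ncard_insert_of_notMem G.notMem_neighborSet_self,
    Nat.card_eq_fintype_card, hcard, degN]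
  omega

lemma nonempty_iso_completeBipartiteGraph_of_card_eq (hG : G.CliqueFree 3) {v : V}
    (hdeg : ∀ u, G.Adj v u → 2 ≤ G.degN u) (hcard : Fintype.card V = G.degN v + 2) :
    Nonempty (G ≃g completeBipartiteGraph (Fin 2) (Fin (G.degN v))) := by
  classical
  obtain ⟨w₀, hw₀⟩ := exists_compl_insert_neighborSet_eq_singleton hcard
  have hcardN : Nat.card ↥(G.neighborSet v)ᶜᶜ = G.degN v := by
    rw [compl_compl, Nat.card_coe_set_eq, degN]
  have hcardNc : Nat.card ↥(G.neighborSet v)ᶜ = 2 := by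
    rw [Nat.card_coe_set_eq, Set.ncard_compl, Nat.card_eq_fintype_card, hcard, degN]
    omega
  exact ⟨(isoCompleteBipartiteGraphOfAdjIff _
      (adj_iff_of_compl_insert_neighborSet_eq_singleton hG hdeg hw₀)).trans <|
    completeBipartiteGraphCongr ((Finite.equivFin _).trans (finCongr hcardNc))
      ((Finite.equivFin _).trans (finCongr hcardN))⟩

end SimpleGraph

section IsBigirthGraph

variable {V : Type*} {G : SimpleGraph V} {r m g : ℕ}

lemma isBigirthGraph_completeBipartiteGraph (hr : 2 ≤ r) (hm : 2 ≤ m) :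
    IsBigirthGraph (completeBipartiteGraph (Fin r) (Fin m)) r m 4 := by
  have : Nontrivial (Fin r) := Fin.nontrivial_iff_two_le.2 hr
  have : Nontrivial (Fin m) := Fin.nontrivial_iff_two_le.2 hm
  refine ⟨girth_completeBipartiteGraph, ?_, ⟨.inr ⟨0, by omega⟩, ?_⟩, ⟨.inl ⟨0, by omega⟩, ?_⟩⟩
  · rintro (a | b)
    · simp [degN_completeBipartiteGraph_inl]
    · simp [degN_completeBipartiteGraph_inr]
  · simp [degN_completeBipartiteGraph_inr]
  · simp [degN_completeBipartiteGraph_inl]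

lemma IsBigirthGraph.cliqueFree_three (hG : IsBigirthGraph G r m g) (hg : 3 < g) :
    G.CliqueFree 3 :=
  cliqueFree_three_of_three_lt_girth (hG.1 ▸ hg)

lemma IsBigirthGraph.le_degN (hG : IsBigirthGraph G r m g) (hrm : r ≤ m) (u : V) :
    r ≤ G.degN u := by
  rcases hG.2.1 u with h | h <;> omega

end IsBigirthGraph

/-- For `m ≥ 3`, `n_p({2,m};4) = m+2`, and the complete bipartite graph
`K_{2,m}` is the unique planar `({2,m};4)`-cage up to isomorphism. -/
theorem planar_two_m_four_cages (m : ℕ) (hm : 3 ≤ m) :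
    IsLeast (bicageOrders 2 m 4) (m + 2) ∧
    ∀ (V : Type) [Fintype V] (G : SimpleGraph V),
      G.IsPlanar → IsBigirthGraph G 2 m 4 → Fintype.card V = m + 2 →
      Nonempty (G ≃g completeBipartiteGraph (Fin 2) (Fin m)) := by
  refine ⟨⟨⟨Fin 2 ⊕ Fin m, inferInstance, _, completeBipartiteGraph_isPlanar (by simp),
    isBigirthGraph_completeBipartiteGraph le_rfl (by omega), by simp [add_comm]⟩, ?_⟩, ?_⟩
  · rintro n ⟨V, _, G, -, hG, rfl⟩
    obtain ⟨v, hv⟩ := hG.2.2.2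
    obtain ⟨u, hvu⟩ : (G.neighborSet v).Nonempty :=
      Set.nonempty_of_ncard_ne_zero (show G.degN v ≠ 0 by omega)
    exact hv ▸ degN_add_two_le_card (hG.cliqueFree_three (by omega)) hvu
      (hG.le_degN (by omega) u)
  · intro V _ G _ hG hcard
    obtain ⟨v, rfl⟩ := hG.2.2.2
    exact nonempty_iso_completeBipartiteGraph_of_card_eq (hG.cliqueFree_three (by omega))
      (fun u _ ↦ hG.le_degN (by omega) u) hcard
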